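/- arXiv:1402.1860 — 2 statements merged into one kernel-verified Lean document; each statement's English description precedes it below -/
import Mathlib

section
/- The function ξ₁(ρ₁,ρ₂) = (1-ρ₁ρ₂)(2-ρ₁²-ρ₂²)/((1-ρ₁²)(1-ρ₂²)) satisfies ξ₁(ρ₁,ρ₂) ≥ 2 for all ρ₁,ρ₂ ∈ [0,1), with equality if and only if ρ₁ = ρ₂. -/
noncomputable def xi1 (r1 r2 : ℝ) : ℝ :=
  (1 - r1 * r2) * (2 - r1 ^ 2 - r2 ^ 2) / ((1 - r1 ^ 2) * (1 - r2 ^ 2))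

/-! Clearing denominators, `ξ₁ - 2 = (ρ₁ - ρ₂)² (1 + ρ₁ρ₂) / ((1 - ρ₁²)(1 - ρ₂²))`, and for
`|ρ₁|, |ρ₂| < 1` both `1 + ρ₁ρ₂` and the denominator are positive. -/

theorem xi1_sub_two {r1 r2 : ℝ} (h1 : 1 - r1 ^ 2 ≠ 0) (h2 : 1 - r2 ^ 2 ≠ 0) :
    xi1 r1 r2 - 2 = (r1 - r2) ^ 2 * (1 + r1 * r2) / ((1 - r1 ^ 2) * (1 - r2 ^ 2)) := by
  unfold xi1
  field_simp
  ring

section UnitInterval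

variable {r1 r2 : ℝ} (h1 : |r1| < 1) (h2 : |r2| < 1)
include h1 h2

theorem xi1_sub_two_eq_mul_pos :
    ∃ c > 0, xi1 r1 r2 - 2 = (r1 - r2) ^ 2 * c := by
  have hr1 : 0 < 1 - r1 ^ 2 := by nlinarith [sq_abs r1, abs_nonneg r1]
  have hr2 : 0 < 1 - r2 ^ 2 := by nlinarith [sq_abs r2, abs_nonneg r2]
  have hprod : 0 < 1 + r1 * r2 := by
    have : |r1 * r2| < 1 := by
      rw [abs_mul]; nlinarith [abs_nonneg r1, abs_nonneg r2]
    linarith [neg_abs_le (r1 * r2)]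
  refine ⟨(1 + r1 * r2) / ((1 - r1 ^ 2) * (1 - r2 ^ 2)), by positivity, ?_⟩
  rw [xi1_sub_two hr1.ne' hr2.ne', mul_div_assoc]

theorem two_le_xi1 : 2 ≤ xi1 r1 r2 := by
  obtain ⟨c, hc, h⟩ := xi1_sub_two_eq_mul_pos h1 h2
  nlinarith [sq_nonneg (r1 - r2)]

theorem xi1_eq_two_iff : xi1 r1 r2 = 2 ↔ r1 = r2 := by
  obtain ⟨c, hc, h⟩ := xi1_sub_two_eq_mul_pos h1 h2
  rw [← sub_eq_zero, h, mul_eq_zero, or_iff_left hc.ne', sq_eq_zero_iff, sub_eq_zero]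

end UnitInterval

theorem stmt_0 (r1 r2 : ℝ) (h1 : r1 ∈ Set.Ico (0 : ℝ) 1) (h2 : r2 ∈ Set.Ico (0 : ℝ) 1) :
    2 ≤ xi1 r1 r2 ∧ (xi1 r1 r2 = 2 ↔ r1 = r2) := by
  have habs1 : |r1| < 1 := abs_lt.mpr ⟨by linarith [h1.1], h1.2⟩
  have habs2 : |r2| < 1 := abs_lt.mpr ⟨by linarith [h2.1], h2.2⟩
  exact ⟨two_le_xi1 habs1 habs2, xi1_eq_two_iff habs1 habs2⟩
end

section
/- The function ξ₂(ρ₁,ρ₂) = √((1-ρ₁²)(1-ρ₂²)) / (4 − (ρ₁+ρ₂)²) satisfies 0 < ξ₂(ρ₁,ρ₂) ≤ 1/4 for all ρ₁,ρ₂ ∈ [0,1), with equality ξ₂ = 1/4 if and only if ρ₁ = ρ₂. -/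
noncomputable def xi2 (r1 r2 : ℝ) : ℝ :=
  Real.sqrt ((1 - r1 ^ 2) * (1 - r2 ^ 2)) / (4 - (r1 + r2) ^ 2)

/-! With `a = 1 - r₁²` and `b = 1 - r₂²`, the denominator of `xi2` is
`4 - (r₁ + r₂)² = 2 (a + b) + (r₁ - r₂)²`, so AM-GM `2 √(ab) ≤ a + b` gives
`4 √(ab) + (r₁ - r₂)² ≤ 4 - (r₁ + r₂)²`. This bounds `xi2` by `1/4` and forces `r₁ = r₂` in the
equality case; conversely `xi2 r r = (1 - r²) / (4 (1 - r²))`. -/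

lemma sqrt_mul_le_half_add {a b : ℝ} (ha : 0 ≤ a) (hb : 0 ≤ b) : √(a * b) ≤ (a + b) / 2 :=
  Real.sqrt_le_iff.mpr ⟨by positivity, by nlinarith [sq_nonneg (a - b)]⟩

lemma four_mul_sqrt_add_sq_sub_le {r1 r2 : ℝ} (h1 : r1 ^ 2 ≤ 1) (h2 : r2 ^ 2 ≤ 1) :
    4 * √((1 - r1 ^ 2) * (1 - r2 ^ 2)) + (r1 - r2) ^ 2 ≤ 4 - (r1 + r2) ^ 2 := by
  have amgm := sqrt_mul_le_half_add (sub_nonneg.mpr h1) (sub_nonneg.mpr h2)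
  linear_combination 4 * amgm

lemma xi2_pos {r1 r2 : ℝ} (h1 : r1 ^ 2 < 1) (h2 : r2 ^ 2 < 1) : 0 < xi2 r1 r2 := by
  have hsqrt : 0 < √((1 - r1 ^ 2) * (1 - r2 ^ 2)) :=
    Real.sqrt_pos.mpr (mul_pos (sub_pos.mpr h1) (sub_pos.mpr h2))
  have hgap := four_mul_sqrt_add_sq_sub_le h1.le h2.le
  exact div_pos hsqrt (by linarith [sq_nonneg (r1 - r2)])

lemma xi2_le_one_div_four {r1 r2 : ℝ} (h1 : r1 ^ 2 ≤ 1) (h2 : r2 ^ 2 ≤ 1) :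
    xi2 r1 r2 ≤ 1 / 4 := by
  have hgap := four_mul_sqrt_add_sq_sub_le h1 h2
  have hsqrt := Real.sqrt_nonneg ((1 - r1 ^ 2) * (1 - r2 ^ 2))
  exact div_le_of_le_mul₀ (by linarith [sq_nonneg (r1 - r2)]) (by norm_num)
    (by linarith [sq_nonneg (r1 - r2)])

lemma eq_of_xi2_eq_one_div_four {r1 r2 : ℝ} (h1 : r1 ^ 2 ≤ 1) (h2 : r2 ^ 2 ≤ 1)
    (h : xi2 r1 r2 = 1 / 4) : r1 = r2 := by
  have hden : 4 - (r1 + r2) ^ 2 ≠ 0 := by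
    intro h0
    simp [xi2, h0] at h
  have hsqrt : 4 * √((1 - r1 ^ 2) * (1 - r2 ^ 2)) = 4 - (r1 + r2) ^ 2 := by
    rw [xi2, div_eq_iff hden] at h
    linarith
  have hgap := four_mul_sqrt_add_sq_sub_le h1 h2
  have hsq : (r1 - r2) ^ 2 = 0 := by linarith [sq_nonneg (r1 - r2)]
  exact sub_eq_zero.mp (pow_eq_zero_iff two_ne_zero |>.mp hsq)

lemma xi2_self {r : ℝ} (h : r ^ 2 < 1) : xi2 r r = 1 / 4 := by
  have hpos : 0 < 1 - r ^ 2 := sub_pos.mpr h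
  rw [xi2, Real.sqrt_mul_self hpos.le, div_eq_iff (by nlinarith)]
  ring

lemma xi2_eq_one_div_four_iff {r1 r2 : ℝ} (h1 : r1 ^ 2 < 1) (h2 : r2 ^ 2 < 1) :
    xi2 r1 r2 = 1 / 4 ↔ r1 = r2 :=
  ⟨eq_of_xi2_eq_one_div_four h1.le h2.le, fun h ↦ h ▸ xi2_self h1⟩

theorem stmt_2 (r1 r2 : ℝ) (h1 : r1 ∈ Set.Ico (0 : ℝ) 1) (h2 : r2 ∈ Set.Ico (0 : ℝ) 1) :
    (0 < xi2 r1 r2 ∧ xi2 r1 r2 ≤ 1 / 4) ∧ (xi2 r1 r2 = 1 / 4 ↔ r1 = r2) := by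
  have hr1 : r1 ^ 2 < 1 := pow_lt_one₀ h1.1 h1.2 two_ne_zero
  have hr2 : r2 ^ 2 < 1 := pow_lt_one₀ h2.1 h2.2 two_ne_zero
  exact ⟨⟨xi2_pos hr1 hr2, xi2_le_one_div_four hr1.le hr2.le⟩, xi2_eq_one_div_four_iff hr1 hr2⟩
end
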